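/- Let s_1 < s_2 < \cdots < s_n be real numbers and let \lambda be a sign vector of length n which is not identically zero. Then there exists a real polynomial f with natDegree f = m(\lambda) such that sign(f(s_i)) = \lambda_i for all i. -/
import Mathlib


open Finset

/-- `i < j` is an even gap of the sign vector `lam`: the entries at `i` and `j` are
nonzero of opposite sign, all entries strictly between are zero, and the number
`j - i - 1` of entries in between is even. -/
def IsEvenGap {n : ℕ} (lam : Fin n → SignType) (i j : Fin n) : Prop :=
  i < j ∧ lam i ≠ 0 ∧ lam j ≠ 0 ∧ lam i = -lam j ∧
    (∀ r, i < r → r < j → lam r = 0) ∧ Even ((j : ℕ) - (i : ℕ) - 1)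

/-- `i < j` is an odd gap of the sign vector `lam`: the entries at `i` and `j` are
nonzero of the same sign, all entries strictly between are zero, and the number
`j - i - 1` of entries in between is odd. -/
def IsOddGap {n : ℕ} (lam : Fin n → SignType) (i j : Fin n) : Prop :=
  i < j ∧ lam i ≠ 0 ∧ lam j ≠ 0 ∧ lam i = lam j ∧
    (∀ r, i < r → r < j → lam r = 0) ∧ Odd ((j : ℕ) - (i : ℕ) - 1)

instance {n : ℕ} (lam : Fin n → SignType) (i j : Fin n) : Decidable (IsEvenGap lam i j) := by
  unfold IsEvenGap; infer_instance

instance {n : ℕ} (lam : Fin n → SignType) (i j : Fin n) : Decidable (IsOddGap lam i j) := by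
  unfold IsOddGap; infer_instance

/-- `m(λ)`: the number of even gaps, plus the number of odd gaps, plus the number
of zero entries of the sign vector `λ`. -/
def mVal {n : ℕ} (lam : Fin n → SignType) : ℕ :=
  (univ.filter fun p : Fin n × Fin n => IsEvenGap lam p.1 p.2).card +
  (univ.filter fun p : Fin n × Fin n => IsOddGap lam p.1 p.2).card +
  (univ.filter fun i : Fin n => lam i = 0).card

/-! ### Auxiliary definitions -/

/-- A gap: either an even gap or an odd gap. -/
def IsGap {n : ℕ} (lam : Fin n → SignType) (i j : Fin n) : Prop :=
  IsEvenGap lam i j ∨ IsOddGap lam i j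

instance {n : ℕ} (lam : Fin n → SignType) (i j : Fin n) : Decidable (IsGap lam i j) := by
  unfold IsGap; infer_instance

/-- The set of zero entries. -/
def Zset {n : ℕ} (lam : Fin n → SignType) : Finset (Fin n) :=
  univ.filter fun i => lam i = 0

/-- The set of gaps. -/
def Gset {n : ℕ} (lam : Fin n → SignType) : Finset (Fin n × Fin n) :=
  univ.filter fun p => IsGap lam p.1 p.2

lemma signType_ne_neg_self {a : SignType} (ha : a ≠ 0) : a ≠ -a := by
  revert ha; cases a <;> decide

lemma signType_eq_neg_of_ne {a b : SignType} (ha : a ≠ 0) (hb : b ≠ 0) (hab : a ≠ b) :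
    a = -b := by
  revert ha hb hab; cases a <;> cases b <;> decide

lemma signType_neg_mul_neg_one (a : SignType) : -a * -1 = a := by
  cases a <;> decide

lemma signType_sign_coe (a : SignType) : SignType.sign ((a : ℝ)) = a := by
  cases a <;> simp

lemma signType_sign_prod {ι : Type*} (t : Finset ι) (f : ι → ℝ) :
    SignType.sign (∏ x ∈ t, f x) = ∏ x ∈ t, SignType.sign (f x) :=
  map_prod signHom f t

lemma prod_ite_neg_one {ι : Type*} (t : Finset ι) (p : ι → Prop) [DecidablePred p] :
    (∏ x ∈ t, (if p x then (-1 : SignType) else 1)) = (-1) ^ (t.filter p).card := by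
  rw [Finset.prod_ite, Finset.prod_const, Finset.prod_const, one_pow, mul_one]

lemma mVal_eq {n : ℕ} (lam : Fin n → SignType) :
    mVal lam = (Gset lam).card + (Zset lam).card := by
  have hdisj : Disjoint (univ.filter fun p : Fin n × Fin n => IsEvenGap lam p.1 p.2)
      (univ.filter fun p : Fin n × Fin n => IsOddGap lam p.1 p.2) := by
    rw [Finset.disjoint_left]
    intro p hp hp'
    rw [Finset.mem_filter] at hp hp'
    obtain ⟨_, _, hj, he, _, _⟩ := hp.2
    obtain ⟨_, _, _, ho, _, _⟩ := hp'.2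
    exact signType_ne_neg_self hj (ho.symm.trans he)
  have : Gset lam = (univ.filter fun p : Fin n × Fin n => IsEvenGap lam p.1 p.2) ∪
      (univ.filter fun p : Fin n × Fin n => IsOddGap lam p.1 p.2) := by
    rw [← Finset.filter_or]; rfl
  rw [mVal, Zset, this, Finset.card_union_of_disjoint hdisj]

section main

variable {n : ℕ} (lam : Fin n → SignType)

/-- Count of zero entries strictly to the right of `i`. -/
def Acount (i : Fin n) : ℕ := ((Zset lam).filter fun k => i < k).card

/-- Count of gaps whose left endpoint is `≥ i`. -/
def Bcount (i : Fin n) : ℕ := ((Gset lam).filter fun p => i ≤ p.1).card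

/-- The key sign invariant. -/
def keySign (i : Fin n) : SignType :=
  lam i * (-1) ^ (Acount lam i + Bcount lam i)

lemma Acount_step {i j : Fin n} (hij : i < j) (hj : lam j ≠ 0)
    (hbet : ∀ r, i < r → r < j → lam r = 0) :
    Acount lam i = ((j : ℕ) - (i : ℕ) - 1) + Acount lam j := by
  have hset : (Zset lam).filter (fun k => i < k) =
      Ioo i j ∪ (Zset lam).filter (fun k => j < k) := by
    ext k
    simp only [Zset, Finset.mem_filter, Finset.mem_univ, true_and, Finset.mem_union,
      Finset.mem_Ioo]
    constructor
    · rintro ⟨hk0, hik⟩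
      rcases lt_trichotomy k j with h | h | h
      · exact Or.inl ⟨hik, h⟩
      · exact absurd (h ▸ hk0) hj
      · exact Or.inr ⟨hk0, h⟩
    · rintro (⟨h1, h2⟩ | ⟨h1, h2⟩)
      · exact ⟨hbet k h1 h2, h1⟩
      · exact ⟨h1, lt_trans hij h2⟩
  have hdisj : Disjoint (Ioo i j) ((Zset lam).filter fun k => j < k) := by
    rw [Finset.disjoint_left]
    intro k hk hk'
    rw [Finset.mem_Ioo] at hk
    rw [Finset.mem_filter] at hk'
    exact absurd (lt_trans hk.2 hk'.2) (lt_irrefl k)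
  rw [Acount, hset, Finset.card_union_of_disjoint hdisj, Fin.card_Ioo, Acount]

lemma gap_unique {i j : Fin n} (hij : i < j) (hi : lam i ≠ 0) (hj : lam j ≠ 0)
    (hbet : ∀ r, i < r → r < j → lam r = 0) {p : Fin n × Fin n}
    (hp : p ∈ Gset lam) (hip : i ≤ p.1) (hpj : p.1 < j) : p = (i, j) := by
  rw [Gset, Finset.mem_filter] at hp
  obtain ⟨h12, h1, h2, _, hbet', _⟩ : p.1 < p.2 ∧ lam p.1 ≠ 0 ∧ lam p.2 ≠ 0 ∧ _ ∧
      (∀ r, p.1 < r → r < p.2 → lam r = 0) ∧ _ := by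
    rcases hp.2 with h | h
    · exact ⟨h.1, h.2.1, h.2.2.1, trivial, h.2.2.2.2.1, trivial⟩
    · exact ⟨h.1, h.2.1, h.2.2.1, trivial, h.2.2.2.2.1, trivial⟩
  have hp1 : p.1 = i := by
    rcases eq_or_lt_of_le hip with h | h
    · exact h.symm
    · exact absurd (hbet p.1 h hpj) h1
  have hp2 : p.2 = j := by
    rcases lt_trichotomy p.2 j with h | h | h
    · exact absurd (hbet p.2 (hp1 ▸ h12) h) h2
    · exact h
    · exact absurd (hbet' j (hp1 ▸ hij) h) hj
  exact Prod.ext hp1 hp2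

lemma Bcount_step {i j : Fin n} (hij : i < j) (hi : lam i ≠ 0) (hj : lam j ≠ 0)
    (hbet : ∀ r, i < r → r < j → lam r = 0) :
    Bcount lam i = (if IsGap lam i j then 1 else 0) + Bcount lam j := by
  have hset : (Gset lam).filter (fun p => i ≤ p.1) =
      (if IsGap lam i j then {((i, j) : Fin n × Fin n)} else ∅) ∪
      (Gset lam).filter (fun p => j ≤ p.1) := by
    ext p
    constructor
    · intro hp
      rw [Finset.mem_filter] at hp
      rcases lt_or_ge p.1 j with h | h
      · have hpij := gap_unique lam hij hi hj hbet hp.1 hp.2 h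
        have hgap : IsGap lam i j := by
          have := hp.1
          rw [Gset, Finset.mem_filter, hpij] at this
          exact this.2
        rw [Finset.mem_union, if_pos hgap]
        exact Or.inl (Finset.mem_singleton.mpr hpij)
      · exact Finset.mem_union.mpr (Or.inr (Finset.mem_filter.mpr ⟨hp.1, h⟩))
    · intro hp
      rw [Finset.mem_union] at hp
      rcases hp with hp | hp
      · split_ifs at hp with hgap
        · rw [Finset.mem_singleton] at hp
          subst hp
          exact Finset.mem_filter.mpr
            ⟨Finset.mem_filter.mpr ⟨Finset.mem_univ _, hgap⟩, le_refl _⟩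
        · exact absurd hp (Finset.notMem_empty _)
      · rw [Finset.mem_filter] at hp
        exact Finset.mem_filter.mpr ⟨hp.1, le_trans (le_of_lt hij) hp.2⟩
  have hdisj : Disjoint (if IsGap lam i j then {((i, j) : Fin n × Fin n)} else ∅)
      ((Gset lam).filter fun p => j ≤ p.1) := by
    split_ifs
    · rw [Finset.disjoint_left]
      intro p hp hp'
      rw [Finset.mem_singleton] at hp
      rw [Finset.mem_filter] at hp'
      subst hp
      exact absurd (lt_of_lt_of_le hij hp'.2) (lt_irrefl _)
    · exact Finset.disjoint_empty_left _
  rw [Bcount, hset, Finset.card_union_of_disjoint hdisj, Bcount]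
  congr 1
  split_ifs <;> simp

lemma keySign_step {i j : Fin n} (hij : i < j) (hi : lam i ≠ 0) (hj : lam j ≠ 0)
    (hbet : ∀ r, i < r → r < j → lam r = 0) :
    keySign lam i = keySign lam j := by
  set d : ℕ := (j : ℕ) - (i : ℕ) - 1 with hd
  set g : ℕ := if IsGap lam i j then 1 else 0 with hg
  have hA := Acount_step lam hij hj hbet
  have hB := Bcount_step lam hij hi hj hbet
  have hexp : Acount lam i + Bcount lam i = (d + g) + (Acount lam j + Bcount lam j) := by
    rw [hA, hB]; ring
  rw [keySign, keySign, hexp, pow_add, ← mul_assoc]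
  congr 1
  -- goal : lam i * (-1)^(d+g) = lam j
  rcases eq_or_ne (lam i) (lam j) with heq | hne
  · have hgap : IsGap lam i j ↔ Odd d := by
      constructor
      · rintro (⟨_, _, _, he, _, _⟩ | ⟨_, _, _, _, _, ho⟩)
        · exact absurd (heq ▸ he) (signType_ne_neg_self hj)
        · exact ho
      · intro ho
        exact Or.inr ⟨hij, hi, hj, heq, hbet, ho⟩
    have heven : Even (d + g) := by
      rcases Nat.even_or_odd d with he | ho
      · have : g = 0 := by
          rw [hg, if_neg]
          rw [hgap]
          exact (Nat.not_odd_iff_even.mpr he)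
        rw [this, Nat.add_zero]; exact he
      · have : g = 1 := by rw [hg, if_pos (hgap.mpr ho)]
        rw [this]
        exact Odd.add_one ho
    rw [heven.neg_one_pow, mul_one, heq]
  · have heqneg : lam i = -lam j := signType_eq_neg_of_ne hi hj hne
    have hgap : IsGap lam i j ↔ Even d := by
      constructor
      · rintro (⟨_, _, _, _, _, he⟩ | ⟨_, _, _, ho, _, _⟩)
        · exact he
        · exact absurd ho hne
      · intro he
        exact Or.inl ⟨hij, hi, hj, heqneg, hbet, he⟩
    have hodd : Odd (d + g) := by
      rcases Nat.even_or_odd d with he | ho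
      · have : g = 1 := by rw [hg, if_pos (hgap.mpr he)]
        rw [this]
        exact Even.add_one he
      · have : g = 0 := by
          rw [hg, if_neg]
          rw [hgap]
          exact (Nat.not_even_iff_odd.mpr ho)
        rw [this, Nat.add_zero]; exact ho
    rw [hodd.neg_one_pow, heqneg]
    exact signType_neg_mul_neg_one _

lemma keySign_const_aux (d : ℕ) : ∀ i j : Fin n, lam i ≠ 0 → lam j ≠ 0 → i < j →
    (j : ℕ) - (i : ℕ) ≤ d → keySign lam i = keySign lam j := by
  induction d with
  | zero =>
    intro i j _ _ hij hle
    have h1 : (i : ℕ) < (j : ℕ) := hij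
    omega
  | succ d ih =>
    intro i j hi hj hij hle
    have hTne : (univ.filter fun r : Fin n => i < r ∧ lam r ≠ 0).Nonempty :=
      ⟨j, Finset.mem_filter.mpr ⟨Finset.mem_univ _, hij, hj⟩⟩
    set j' := (univ.filter fun r : Fin n => i < r ∧ lam r ≠ 0).min' hTne with hj'def
    have hj'mem := Finset.min'_mem _ hTne
    rw [Finset.mem_filter] at hj'mem
    obtain ⟨_, hij', hj'⟩ := hj'mem
    rw [← hj'def] at hij' hj'
    have hj'le : j' ≤ j := by
      rw [hj'def]
      exact Finset.min'_le _ _ (Finset.mem_filter.mpr ⟨Finset.mem_univ _, hij, hj⟩)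
    have hbet : ∀ r, i < r → r < j' → lam r = 0 := by
      intro r hir hrj'
      by_contra hr
      have h2 : j' ≤ r := by
        rw [hj'def]
        exact Finset.min'_le _ r (Finset.mem_filter.mpr ⟨Finset.mem_univ _, hir, hr⟩)
      exact absurd h2 (not_le_of_gt hrj')
    have hstep := keySign_step lam hij' hi hj' hbet
    rcases eq_or_lt_of_le hj'le with h | h
    · rw [hstep, h]
    · have : (j : ℕ) - (j' : ℕ) ≤ d := by
        have h1 : (i : ℕ) < (j' : ℕ) := hij'
        have h2 : (j' : ℕ) < (j : ℕ) := h
        omega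
      rw [hstep, ih j' j hj' hj h this]

lemma keySign_const {i j : Fin n} (hi : lam i ≠ 0) (hj : lam j ≠ 0) :
    keySign lam i = keySign lam j := by
  rcases lt_trichotomy i j with h | h | h
  · exact keySign_const_aux lam ((j : ℕ) - (i : ℕ)) i j hi hj h (le_refl _)
  · rw [h]
  · exact (keySign_const_aux lam ((i : ℕ) - (j : ℕ)) j i hj hi h (le_refl _)).symm

end main

/-- The midpoint flip root attached to a pair. -/
noncomputable def midpt {n : ℕ} (s : Fin n → ℝ) (p : Fin n × Fin n) : ℝ :=
  (s p.1 + s ⟨min ((p.1 : ℕ) + 1) (p.2 : ℕ), lt_of_le_of_lt (min_le_right _ _) p.2.isLt⟩) / 2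

theorem exists_poly_natDegree_eq_mVal {n : ℕ} (s : Fin n → ℝ) (hs : StrictMono s)
    (lam : Fin n → SignType) (hlam : lam ≠ 0) :
    ∃ f : Polynomial ℝ, f.natDegree = mVal lam ∧
      ∀ i, SignType.sign (f.eval (s i)) = lam i := by
  classical
  obtain ⟨i₀, hi₀⟩ : ∃ i, lam i ≠ 0 := Function.ne_iff.mp hlam
  -- basic facts about gaps and midpoints
  have hGfact : ∀ p ∈ Gset lam, p.1 < p.2 ∧ lam p.1 ≠ 0 := by
    intro p hp
    rw [Gset, Finset.mem_filter] at hp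
    rcases hp.2 with h | h
    · exact ⟨h.1, h.2.1⟩
    · exact ⟨h.1, h.2.1⟩
  have hmid : ∀ p ∈ Gset lam, ∀ i : Fin n, lam i ≠ 0 →
      (p.1 < i → midpt s p < s i) ∧ (i ≤ p.1 → s i < midpt s p) := by
    intro p hp i hi
    obtain ⟨h12, _⟩ := hGfact p hp
    have h12' : (p.1 : ℕ) + 1 ≤ (p.2 : ℕ) := h12
    set q : Fin n := ⟨min ((p.1 : ℕ) + 1) (p.2 : ℕ),
      lt_of_le_of_lt (min_le_right _ _) p.2.isLt⟩ with hq
    have hqval : (q : ℕ) = (p.1 : ℕ) + 1 := min_eq_left h12'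
    have hlt : s p.1 < s q := hs (by rw [Fin.lt_def, hqval]; omega)
    constructor
    · intro h
      have : s q ≤ s i := hs.monotone (by rw [Fin.le_def, hqval]; exact h)
      calc midpt s p < s q := by rw [midpt]; linarith
        _ ≤ s i := this
    · intro h
      have : s i ≤ s p.1 := hs.monotone h
      calc s i ≤ s p.1 := this
        _ < midpt s p := by rw [midpt]; linarith
  -- the polynomial
  set c : ℝ := ((keySign lam i₀ : SignType) : ℝ) with hc
  have hkey0 : keySign lam i₀ ≠ 0 := by
    rw [keySign]
    apply mul_ne_zero hi₀
    apply pow_ne_zero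
    decide
  have hsc : SignType.sign c = keySign lam i₀ := signType_sign_coe _
  have hcne : c ≠ 0 := by
    intro h0
    rw [h0, sign_zero] at hsc
    exact hkey0 hsc.symm
  set P : Polynomial ℝ := ∏ k ∈ Zset lam, (Polynomial.X - Polynomial.C (s k)) with hP
  set Q : Polynomial ℝ := ∏ p ∈ Gset lam, (Polynomial.X - Polynomial.C (midpt s p)) with hQ
  refine ⟨Polynomial.C c * (P * Q), ?_, ?_⟩
  · -- degree
    have hPne : ∀ k ∈ Zset lam, Polynomial.X - Polynomial.C (s k) ≠ 0 :=
      fun k _ => Polynomial.X_sub_C_ne_zero _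
    have hQne : ∀ p ∈ Gset lam, Polynomial.X - Polynomial.C (midpt s p) ≠ 0 :=
      fun p _ => Polynomial.X_sub_C_ne_zero _
    have hPdeg : P.natDegree = (Zset lam).card := by
      rw [hP, Polynomial.natDegree_prod _ _ hPne]
      simp [Polynomial.natDegree_X_sub_C]
    have hQdeg : Q.natDegree = (Gset lam).card := by
      rw [hQ, Polynomial.natDegree_prod _ _ hQne]
      simp [Polynomial.natDegree_X_sub_C]
    have hPne' : P ≠ 0 := Finset.prod_ne_zero_iff.mpr hPne
    have hQne' : Q ≠ 0 := Finset.prod_ne_zero_iff.mpr hQne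
    rw [Polynomial.natDegree_C_mul hcne, Polynomial.natDegree_mul hPne' hQne',
      hPdeg, hQdeg, mVal_eq, add_comm]
  · intro i
    rcases eq_or_ne (lam i) 0 with hi | hi
    · -- zero entry: the factor at i vanishes
      have hiZ : i ∈ Zset lam := Finset.mem_filter.mpr ⟨Finset.mem_univ _, hi⟩
      have : P.eval (s i) = 0 := by
        rw [hP, Polynomial.eval_prod]
        exact Finset.prod_eq_zero hiZ (by simp)
      simp [this, hi]
    · -- nonzero entry
      have heval : (Polynomial.C c * (P * Q)).eval (s i) =
          c * (P.eval (s i) * Q.eval (s i)) := by simp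
      have hsignP : SignType.sign (P.eval (s i)) = (-1) ^ (Acount lam i) := by
        rw [hP, Polynomial.eval_prod, signType_sign_prod]
        have h1 : ∀ k ∈ Zset lam,
            SignType.sign ((Polynomial.X - Polynomial.C (s k)).eval (s i)) =
            if i < k then (-1 : SignType) else 1 := by
          intro k hk
          rw [Zset, Finset.mem_filter] at hk
          have hki : k ≠ i := fun h => hi (h ▸ hk.2)
          simp only [Polynomial.eval_sub, Polynomial.eval_X, Polynomial.eval_C]
          rcases lt_or_ge i k with h | h
          · rw [if_pos h, sign_neg (sub_neg.mpr (hs h))]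
          · rw [if_neg (not_lt_of_ge h), sign_pos (sub_pos.mpr (hs (h.lt_of_ne hki)))]
        rw [Finset.prod_congr rfl h1, prod_ite_neg_one, Acount]
      have hsignQ : SignType.sign (Q.eval (s i)) = (-1) ^ (Bcount lam i) := by
        rw [hQ, Polynomial.eval_prod, signType_sign_prod]
        have h1 : ∀ p ∈ Gset lam,
            SignType.sign ((Polynomial.X - Polynomial.C (midpt s p)).eval (s i)) =
            if i ≤ p.1 then (-1 : SignType) else 1 := by
          intro p hp
          simp only [Polynomial.eval_sub, Polynomial.eval_X, Polynomial.eval_C]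
          rcases le_or_gt i p.1 with h | h
          · rw [if_pos h, sign_neg (sub_neg.mpr ((hmid p hp i hi).2 h))]
          · rw [if_neg (not_le_of_gt h), sign_pos (sub_pos.mpr ((hmid p hp i hi).1 h))]
        rw [Finset.prod_congr rfl h1, prod_ite_neg_one, Bcount]
      rw [heval, sign_mul, sign_mul, hsignP, hsignQ, hsc, keySign_const lam hi₀ hi, keySign,
        ← pow_add, mul_assoc, ← mul_pow, neg_mul_neg, one_mul, one_pow, mul_one]
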